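/- Let r₀ ∈ ℝ, λ > 0, a ∈ (r₀, +∞], and let μ : [r₀,∞) → ℝ be non-increasing. Let β : [r₀,a) → ℝ be locally absolutely continuous with β(r₀) = β̄₋(r₀) and β'(r) = (β(r) − β̄₋(r))·(β(r) − β₊(r)) for almost every r ∈ [r₀,a). Then β'(r) ≥ 0 for almost every r ∈ [r₀,a), and consequently β is non-decreasing on [r₀,a); in particular β(r₀) ≤ β(r) for all r ∈ [r₀,a). -/

import Mathlib

open MeasureTheory Filter Set intervalIntegral

/-- `β₋(r) = −μ(r)/2 − √(μ(r)²/4 + λ)`. -/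
noncomputable def betaMinus (lam : ℝ) (μ : ℝ → ℝ) (r : ℝ) : ℝ :=
  -μ r / 2 - Real.sqrt (μ r ^ 2 / 4 + lam)

/-- `β₊(r) = −μ(r)/2 + √(μ(r)²/4 + λ)`. -/
noncomputable def betaPlus (lam : ℝ) (μ : ℝ → ℝ) (r : ℝ) : ℝ :=
  -μ r / 2 + Real.sqrt (μ r ^ 2 / 4 + lam)

/-- `β̄₋(r) = limsup_{t→r} β₋(t)` (within the domain `[r₀,∞)`), the right-continuous
(upper semicontinuous) modification of `β₋`. -/
noncomputable def betaMinusBar (r₀ lam : ℝ) (μ : ℝ → ℝ) (r : ℝ) : ℝ :=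
  Filter.limsup (betaMinus lam μ) (nhdsWithin r (Set.Ici r₀))

lemma sqrt_lip_aux (lam u v : ℝ) (hlam : 0 < lam) :
    |Real.sqrt (v ^ 2 / 4 + lam) - Real.sqrt (u ^ 2 / 4 + lam)| ≤ |v - u| / 2 := by
  set sv := Real.sqrt (v ^ 2 / 4 + lam) with hsv
  set su := Real.sqrt (u ^ 2 / 4 + lam) with hsu
  have hsv2 : sv ^ 2 = v ^ 2 / 4 + lam := Real.sq_sqrt (by positivity)
  have hsu2 : su ^ 2 = u ^ 2 / 4 + lam := Real.sq_sqrt (by positivity)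
  have hsv0 : 0 ≤ sv := Real.sqrt_nonneg _
  have hsu0 : 0 ≤ su := Real.sqrt_nonneg _
  have hkey : 2 * lam + u * v / 2 ≤ 2 * (sv * su) := by
    rcases le_or_gt (2 * lam + u * v / 2) 0 with h | h
    · nlinarith
    · nlinarith [sq_nonneg (u - v), sq_nonneg (2 * (sv * su) - (2 * lam + u * v / 2)),
        mul_nonneg hsv0 hsu0, sq_nonneg (2 * (sv * su) + (2 * lam + u * v / 2))]
  rw [abs_le]
  constructor
  · rcases le_or_gt (-(|v - u| / 2)) (sv - su) with h | h
    · exact h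
    · exfalso
      have h1 : su - sv > |v - u| / 2 := by linarith
      have h2 : 0 ≤ |v - u| / 2 := by positivity
      nlinarith [abs_nonneg (v - u), sq_abs (v - u)]
  · rcases le_or_gt (sv - su) (|v - u| / 2) with h | h
    · exact h
    · exfalso
      have h2 : 0 ≤ |v - u| / 2 := by positivity
      nlinarith [abs_nonneg (v - u), sq_abs (v - u)]

lemma betaMinus_mono {r₀ lam : ℝ} (hlam : 0 < lam) {μ : ℝ → ℝ}
    (hμ : AntitoneOn μ (Set.Ici r₀)) :
    MonotoneOn (betaMinus lam μ) (Set.Ici r₀) := by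
  intro x hx y hy hxy
  have hμ' : μ y ≤ μ x := hμ hx hy hxy
  have h := sqrt_lip_aux lam (μ y) (μ x) hlam
  rw [abs_le] at h
  have h2 : |μ x - μ y| = μ x - μ y := abs_of_nonneg (by linarith)
  unfold betaMinus
  rw [h2] at h
  linarith [h.1, h.2]

lemma betaPlus_mono {r₀ lam : ℝ} (hlam : 0 < lam) {μ : ℝ → ℝ}
    (hμ : AntitoneOn μ (Set.Ici r₀)) :
    MonotoneOn (betaPlus lam μ) (Set.Ici r₀) := by
  intro x hx y hy hxy
  have hμ' : μ y ≤ μ x := hμ hx hy hxy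
  have h := sqrt_lip_aux lam (μ y) (μ x) hlam
  rw [abs_le] at h
  have h2 : |μ x - μ y| = μ x - μ y := abs_of_nonneg (by linarith)
  unfold betaPlus
  rw [h2] at h
  linarith [h.1, h.2]

lemma betaMinus_neg (lam : ℝ) (hlam : 0 < lam) (μ : ℝ → ℝ) (r : ℝ) :
    betaMinus lam μ r < 0 := by
  unfold betaMinus
  have h1 : |μ r| / 2 = Real.sqrt (μ r ^ 2 / 4) := by
    rw [show μ r ^ 2 / 4 = (|μ r| / 2) ^ 2 by rw [div_pow, sq_abs]; ring,
      Real.sqrt_sq (by positivity)]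
  have h2 : Real.sqrt (μ r ^ 2 / 4) < Real.sqrt (μ r ^ 2 / 4 + lam) := by
    apply Real.sqrt_lt_sqrt (by positivity); linarith
  have := abs_nonneg (μ r)
  have := neg_abs_le (μ r)
  nlinarith [h2, h1]

lemma betaPlus_pos (lam : ℝ) (hlam : 0 < lam) (μ : ℝ → ℝ) (r : ℝ) :
    0 < betaPlus lam μ r := by
  unfold betaPlus
  have h1 : |μ r| / 2 = Real.sqrt (μ r ^ 2 / 4) := by
    rw [show μ r ^ 2 / 4 = (|μ r| / 2) ^ 2 by rw [div_pow, sq_abs]; ring,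
      Real.sqrt_sq (by positivity)]
  have h2 : Real.sqrt (μ r ^ 2 / 4) < Real.sqrt (μ r ^ 2 / 4 + lam) := by
    apply Real.sqrt_lt_sqrt (by positivity); linarith
  have := le_abs_self (μ r)
  nlinarith [h2, h1]

lemma ev_ub_aux {r₀ lam : ℝ} {μ : ℝ → ℝ}
    (hmono : MonotoneOn (betaMinus lam μ) (Set.Ici r₀)) {t t' : ℝ} (htt' : t < t') :
    ∀ᶠ s in nhdsWithin t (Set.Ici r₀), betaMinus lam μ s ≤ betaMinus lam μ t' := by
  have h1 : ∀ᶠ s in nhdsWithin t (Set.Ici r₀), s < t' :=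
    eventually_nhdsWithin_of_eventually_nhds (eventually_lt_nhds htt')
  filter_upwards [h1, eventually_mem_nhdsWithin] with s hs hmem
  exact hmono hmem (le_trans hmem hs.le) hs.le

lemma bar_le {r₀ lam : ℝ} {μ : ℝ → ℝ}
    (hmono : MonotoneOn (betaMinus lam μ) (Set.Ici r₀))
    {t t' : ℝ} (ht : r₀ ≤ t) (htt' : t < t') :
    betaMinusBar r₀ lam μ t ≤ betaMinus lam μ t' := by
  haveI : (nhdsWithin t (Set.Ici r₀)).NeBot := nhdsWithin_neBot_of_mem ht
  apply Filter.limsup_le_of_le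
  · apply Filter.isCoboundedUnder_le_of_eventually_le
    exact eventually_mem_nhdsWithin.mono fun s hs => hmono Set.self_mem_Ici hs hs
  · exact ev_ub_aux hmono htt'

lemma le_bar {r₀ lam : ℝ} {μ : ℝ → ℝ}
    (hmono : MonotoneOn (betaMinus lam μ) (Set.Ici r₀)) {t : ℝ} (ht : r₀ ≤ t) :
    betaMinus lam μ t ≤ betaMinusBar r₀ lam μ t := by
  haveI : (nhdsWithin t (Set.Ici r₀)).NeBot := nhdsWithin_neBot_of_mem ht
  apply Filter.le_limsup_of_frequently_le
  · have hsub : nhdsWithin t (Set.Ici t) ≤ nhdsWithin t (Set.Ici r₀) :=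
      nhdsWithin_mono t (Set.Ici_subset_Ici.mpr ht)
    haveI : (nhdsWithin t (Set.Ici t)).NeBot := nhdsWithin_Ici_neBot (le_refl t)
    refine Filter.Frequently.filter_mono ?_ hsub
    exact ((eventually_mem_nhdsWithin (a := t) (s := Set.Ici t)).mono
      fun s hs => hmono ht (ht.trans hs) hs).frequently
  · exact ⟨betaMinus lam μ (t + 1), ev_ub_aux hmono (by linarith)⟩

lemma bar_mono {r₀ lam : ℝ} {μ : ℝ → ℝ}
    (hmono : MonotoneOn (betaMinus lam μ) (Set.Ici r₀))
    {x y : ℝ} (hx : r₀ ≤ x) (hxy : x ≤ y) :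
    betaMinusBar r₀ lam μ x ≤ betaMinusBar r₀ lam μ y := by
  rcases eq_or_lt_of_le hxy with rfl | h
  · exact le_rfl
  · calc betaMinusBar r₀ lam μ x ≤ betaMinus lam μ ((x + y) / 2) :=
          bar_le hmono hx (by linarith)
      _ ≤ betaMinus lam μ y := hmono (by simp only [Set.mem_Ici]; linarith)
          (hx.trans hxy) (by linarith)
      _ ≤ betaMinusBar r₀ lam μ y := le_bar hmono (hx.trans hxy)

lemma bar_neg {r₀ lam : ℝ} (hlam : 0 < lam) {μ : ℝ → ℝ}
    (hmono : MonotoneOn (betaMinus lam μ) (Set.Ici r₀)) {t : ℝ} (ht : r₀ ≤ t) :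
    betaMinusBar r₀ lam μ t < 0 :=
  lt_of_le_of_lt (bar_le hmono ht (lt_add_one t)) (betaMinus_neg lam hlam μ (t + 1))

lemma barrier {c d : ℝ} (hcd : c < d) {F F' : ℝ → ℝ} {r₀ t1 : ℝ} (h01 : r₀ ≤ t1)
    (hFint : IntervalIntegrable F' volume r₀ t1)
    (hrep : ∀ x ∈ Set.Icc r₀ t1, F x = F r₀ + ∫ t in r₀..x, F' t)
    (h0 : F r₀ ≤ c)
    (hae : ∀ᵐ t ∂(volume : Measure ℝ), t ∈ Set.Icc r₀ t1 → c < F t → F t < d → F' t ≤ 0) :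
    F t1 ≤ c := by
  by_contra hcon
  push_neg at hcon
  have huIcc : Set.uIcc r₀ t1 = Set.Icc r₀ t1 := Set.uIcc_of_le h01
  have hFcont : ContinuousOn F (Set.Icc r₀ t1) := by
    have h1 : ContinuousOn (fun x => F r₀ + ∫ t in r₀..x, F' t) (Set.Icc r₀ t1) := by
      apply ContinuousOn.add continuousOn_const
      have := continuousOn_primitive_interval' hFint (Set.left_mem_uIcc (a := r₀) (b := t1))
      rwa [huIcc] at this
    exact h1.congr hrep
  set y : ℝ := (c + min d (F t1)) / 2 with hy
  have hcmin : c < min d (F t1) := lt_min hcd hcon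
  have hy1 : c < y := by simp only [hy]; linarith
  have hy2 : y < d := by have := min_le_left d (F t1); simp only [hy]; linarith
  have hy3 : y < F t1 := by have := min_le_right d (F t1); simp only [hy]; linarith
  set S : Set ℝ := Set.Icc r₀ t1 ∩ F ⁻¹' (Set.Iic c) with hSdef
  have hSne : S.Nonempty := ⟨r₀, ⟨⟨le_rfl, h01⟩, h0⟩⟩
  have hSbdd : BddAbove S := (bddAbove_Icc (a := r₀) (b := t1)).mono Set.inter_subset_left
  have hSclosed : IsClosed S :=
    hFcont.preimage_isClosed_of_isClosed isClosed_Icc isClosed_Iic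
  set s := sSup S with hs
  have hsS : s ∈ S := hSclosed.csSup_mem hSne hSbdd
  have hs1 : s ∈ Set.Icc r₀ t1 := hsS.1
  have hs2 : F s ≤ c := hsS.2
  have hst1 : s < t1 := by
    rcases lt_or_eq_of_le hs1.2 with h | h
    · exact h
    · rw [h] at hs2; exact absurd hs2 (not_le.mpr hcon)
  set T : Set ℝ := Set.Icc s t1 ∩ F ⁻¹' (Set.Ici y) with hTdef
  have hT1 : t1 ∈ T := ⟨⟨hst1.le, le_rfl⟩, hy3.le⟩
  have hTne : T.Nonempty := ⟨t1, hT1⟩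
  have hTbdd : BddBelow T := (bddBelow_Icc : BddBelow (Set.Icc s t1)).mono Set.inter_subset_left
  have hTclosed : IsClosed T :=
    (hFcont.mono (Set.Icc_subset_Icc_left hs1.1)).preimage_isClosed_of_isClosed
      isClosed_Icc isClosed_Ici
  set t2 := sInf T with ht2
  have ht2T : t2 ∈ T := hTclosed.csInf_mem hTne hTbdd
  have ht2y : y ≤ F t2 := ht2T.2
  have hst2 : s < t2 := by
    rcases lt_or_eq_of_le ht2T.1.1 with h | h
    · exact h
    · exact absurd (h ▸ ht2y) (not_le.mpr (lt_of_le_of_lt hs2 hy1))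
  have hmid : ∀ t, s < t → t < t2 → c < F t ∧ F t < d := by
    intro t hts htt2
    have htIcc : t ∈ Set.Icc r₀ t1 := ⟨hs1.1.trans hts.le, (htt2.le.trans ht2T.1.2)⟩
    constructor
    · by_contra hle
      push_neg at hle
      exact absurd (le_csSup hSbdd ⟨htIcc, hle⟩) (not_le.mpr hts)
    · by_contra hge
      push_neg at hge
      have : t ∈ T := ⟨⟨hts.le, htIcc.2⟩, hy2.le.trans hge⟩
      exact absurd (csInf_le hTbdd this) (not_le.mpr htt2)
  have hsub1 : IntervalIntegrable F' volume r₀ s := by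
    apply hFint.mono_set
    rw [huIcc, Set.uIcc_of_le hs1.1]
    exact Set.Icc_subset_Icc le_rfl hs1.2
  have hsub2 : IntervalIntegrable F' volume s t2 := by
    apply hFint.mono_set
    rw [huIcc, Set.uIcc_of_le hst2.le]
    exact Set.Icc_subset_Icc hs1.1 ht2T.1.2
  have hnull : (volume : Measure ℝ) ({s, t2} : Set ℝ) = 0 :=
    ((Set.finite_singleton t2).insert s).measure_zero volume
  have hintle : (∫ t in s..t2, F' t) ≤ 0 := by
    have h1 : 0 ≤ ∫ t in s..t2, (fun t => -F' t) t := by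
      apply intervalIntegral.integral_nonneg_of_ae_restrict hst2.le
      have hae' : ∀ᵐ t ∂((volume : Measure ℝ).restrict (Set.Icc s t2)),
          t ∈ Set.Icc r₀ t1 → c < F t → F t < d → F' t ≤ 0 :=
        ae_restrict_of_ae hae
      have hmem : ∀ᵐ t ∂((volume : Measure ℝ).restrict (Set.Icc s t2)), t ∈ Set.Icc s t2 :=
        ae_restrict_mem measurableSet_Icc
      have hnotend : ∀ᵐ t ∂((volume : Measure ℝ).restrict (Set.Icc s t2)),
          t ∉ ({s, t2} : Set ℝ) := ae_restrict_of_ae (by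
            rw [ae_iff]
            have he : {x : ℝ | ¬ x ∉ ({s, t2} : Set ℝ)} = ({s, t2} : Set ℝ) := by
              ext x; simp [or_iff_not_imp_left]
            rw [he]; exact hnull)
      filter_upwards [hae', hmem, hnotend] with t h1 h2 h3
      have hts : s < t := lt_of_le_of_ne h2.1 (by intro he; exact h3 (by simp [← he]))
      have htt2 : t < t2 := lt_of_le_of_ne h2.2 (by intro he; exact h3 (by simp [he]))
      obtain ⟨hc, hd⟩ := hmid t hts htt2
      have htIcc : t ∈ Set.Icc r₀ t1 := ⟨hs1.1.trans hts.le, (htt2.le.trans ht2T.1.2)⟩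
      simpa using h1 htIcc hc hd
    rw [intervalIntegral.integral_neg] at h1
    linarith
  have hrep_s := hrep s hs1
  have hrep_t2 := hrep t2 ⟨hs1.1.trans hst2.le, ht2T.1.2⟩
  have hadd : (∫ t in r₀..s, F' t) + (∫ t in s..t2, F' t) = ∫ t in r₀..t2, F' t :=
    intervalIntegral.integral_add_adjacent_intervals hsub1 hsub2
  have : F t2 ≤ F s := by rw [hrep_s, hrep_t2, ← hadd]; linarith
  linarith [hs2, ht2y, hy1]

/-- A locally absolutely continuous solution of
`β' = (β − β̄₋)(β − β₊)` on `[r₀, a)` with `β(r₀) = β̄₋(r₀)` has `β' ≥ 0` almost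
everywhere; consequently `β` is non-decreasing on `[r₀, a)`, and in particular
`β(r₀) ≤ β(r)` there. -/
theorem riccati_solution_nondecreasing
    (r₀ lam : ℝ) (hlam : 0 < lam)
    (a : EReal) (ha : (r₀ : EReal) < a)
    (μ : ℝ → ℝ) (hμ : AntitoneOn μ (Set.Ici r₀))
    (β β' : ℝ → ℝ)
    -- β is locally absolutely continuous on [r₀, a): it is the integral of a locally
    -- integrable function β'
    (hAC : ∀ r, r₀ ≤ r → (r : EReal) < a →
      IntervalIntegrable β' volume r₀ r ∧ β r = β r₀ + ∫ t in r₀..r, β' t)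
    -- β satisfies the ODE β' = (β − β̄₋)(β − β₊) almost everywhere on [r₀, a)
    (hode : ∀ᵐ t ∂(volume : Measure ℝ), r₀ ≤ t → (t : EReal) < a →
      β' t = (β t - betaMinusBar r₀ lam μ t) * (β t - betaPlus lam μ t))
    -- initial condition β(r₀) = β̄₋(r₀)
    (hinit : β r₀ = betaMinusBar r₀ lam μ r₀) :
    (∀ᵐ t ∂(volume : Measure ℝ), r₀ ≤ t → (t : EReal) < a → 0 ≤ β' t) ∧
    MonotoneOn β {r : ℝ | r₀ ≤ r ∧ (r : EReal) < a} ∧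
    ∀ r, r₀ ≤ r → (r : EReal) < a → β r₀ ≤ β r := by
  have hbm := betaMinus_mono hlam hμ
  have hbp := betaPlus_mono hlam hμ
  have hlt : ∀ x t1 : ℝ, x ≤ t1 → (t1 : EReal) < a → (x : EReal) < a := by
    intro x t1 h h'
    exact lt_of_le_of_lt (EReal.coe_le_coe_iff.mpr h) h'
  -- Step 1: comparison β ≤ β̄₋ on [r₀, a)
  have hcomp : ∀ t1, r₀ ≤ t1 → (t1 : EReal) < a → β t1 ≤ betaMinusBar r₀ lam μ t1 := by
    intro t1 h1 h2
    obtain ⟨hint, _⟩ := hAC t1 h1 h2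
    have hc0 : betaMinusBar r₀ lam μ t1 < 0 := bar_neg hlam hbm h1
    have hcd : betaMinusBar r₀ lam μ t1 < betaPlus lam μ r₀ :=
      hc0.trans (betaPlus_pos lam hlam μ r₀)
    apply barrier hcd h1 hint
    · intro x hx
      exact (hAC x hx.1 (hlt x t1 hx.2 h2)).2
    · rw [hinit]
      exact bar_mono hbm le_rfl h1
    · filter_upwards [hode] with t hode_t hmem hcF hFd
      rw [hode_t hmem.1 (hlt t t1 hmem.2 h2)]
      apply mul_nonpos_of_nonneg_of_nonpos
      · have : betaMinusBar r₀ lam μ t ≤ betaMinusBar r₀ lam μ t1 := bar_mono hbm hmem.1 hmem.2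
        linarith
      · have : betaPlus lam μ r₀ ≤ betaPlus lam μ t := hbp Set.self_mem_Ici hmem.1 hmem.1
        linarith
  -- Step 2: β' ≥ 0 a.e.
  have hae_nonneg : ∀ᵐ t ∂(volume : Measure ℝ), r₀ ≤ t → (t : EReal) < a → 0 ≤ β' t := by
    filter_upwards [hode] with t h h1 h2
    rw [h h1 h2]
    have hcp := hcomp t h1 h2
    have hbar_neg := bar_neg hlam hbm h1
    have hbp_pos := betaPlus_pos lam hlam μ t
    nlinarith [mul_nonneg (by linarith : (0:ℝ) ≤ betaMinusBar r₀ lam μ t - β t)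
      (by linarith : (0:ℝ) ≤ betaPlus lam μ t - β t)]
  have hmonoβ : MonotoneOn β {r : ℝ | r₀ ≤ r ∧ (r : EReal) < a} := by
    intro x hx y hy hxy
    obtain ⟨hintx, hrepx⟩ := hAC x hx.1 hx.2
    obtain ⟨hinty, hrepy⟩ := hAC y hy.1 hy.2
    have hintxy : IntervalIntegrable β' volume x y := by
      apply hinty.mono_set
      rw [Set.uIcc_of_le (hx.1.trans hxy), Set.uIcc_of_le hxy]
      exact Set.Icc_subset_Icc hx.1 le_rfl
    have hadd : (∫ t in r₀..x, β' t) + (∫ t in x..y, β' t) = ∫ t in r₀..y, β' t :=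
      intervalIntegral.integral_add_adjacent_intervals hintx hintxy
    have hnonneg : 0 ≤ ∫ t in x..y, β' t := by
      apply intervalIntegral.integral_nonneg_of_ae_restrict hxy
      have h1 : ∀ᵐ t ∂((volume : Measure ℝ).restrict (Set.Icc x y)),
          r₀ ≤ t → (t : EReal) < a → 0 ≤ β' t := ae_restrict_of_ae hae_nonneg
      have h2 : ∀ᵐ t ∂((volume : Measure ℝ).restrict (Set.Icc x y)), t ∈ Set.Icc x y :=
        ae_restrict_mem measurableSet_Icc
      filter_upwards [h1, h2] with t ht htm
      exact ht (hx.1.trans htm.1) (hlt t y htm.2 hy.2)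
    rw [hrepx, hrepy, ← hadd]
    linarith
  exact ⟨hae_nonneg, hmonoβ, fun r hr1 hr2 => hmonoβ ⟨le_rfl, ha⟩ ⟨hr1, hr2⟩ hr1⟩
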